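/- For every integer N ≥ 1, the function u_N(x,t) = −⟨m_N⟩_{N,(x,t)} is smooth on ℝ × [0,∞), satisfies u_N(x,0) = −tanh x, and solves exactly the viscous Burgers equation ∂_t u_N + u_N ∂_x u_N − (1/(2N)) ∂²_{xx} u_N = 0 on ℝ × (0,∞). -/

import Mathlib

open Real

/-- The Curie–Weiss magnetization `m_N(σ) = (1/N) ∑ᵢ σᵢ`. -/
noncomputable def cwM (N : ℕ) (σ : Fin N → ({-1, 1} : Finset ℝ)) : ℝ :=
  (∑ i, (σ i : ℝ)) / N

/-- The Curie–Weiss Boltzmann weight `B_N(σ; x, t) = exp(N t m_N(σ)²/2 + N x m_N(σ))`. -/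
noncomputable def cwB (N : ℕ) (x t : ℝ) (σ : Fin N → ({-1, 1} : Finset ℝ)) : ℝ :=
  Real.exp ((N : ℝ) * t * (cwM N σ) ^ 2 / 2 + (N : ℝ) * x * cwM N σ)

/-- The Curie–Weiss partition function `Z_N(x,t) = ∑_σ B_N(σ; x, t)`. -/
noncomputable def cwZ (N : ℕ) (x t : ℝ) : ℝ :=
  ∑ σ : Fin N → ({-1, 1} : Finset ℝ), cwB N x t σ

/-- The Curie–Weiss Gibbs average `⟨f⟩_{N,(x,t)} = Z_N(x,t)⁻¹ ∑_σ f(σ) B_N(σ; x, t)`. -/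
noncomputable def cwGibbs (N : ℕ) (x t : ℝ) (f : (Fin N → ({-1, 1} : Finset ℝ)) → ℝ) : ℝ :=
  (∑ σ : Fin N → ({-1, 1} : Finset ℝ), f σ * cwB N x t σ) / cwZ N x t

/-- The Curie–Weiss velocity field `u_N(x,t) = -⟨m_N⟩_{N,(x,t)}`. -/
noncomputable def cwU (N : ℕ) (x t : ℝ) : ℝ := -cwGibbs N x t (cwM N)

/-- For every `N ≥ 1`, the velocity field `u_N(x,t) = -⟨m_N⟩_{N,(x,t)}` is smooth on
`ℝ × [0, ∞)`, satisfies `u_N(x,0) = -tanh x`, and solves exactly the viscous Burgers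
equation `∂ₜu_N + u_N ∂ₓu_N - (1/(2N)) ∂ₓₓu_N = 0` on `ℝ × (0, ∞)`. -/

instance : Nonempty (({-1, 1} : Finset ℝ) : Type) := ⟨⟨1, by simp⟩⟩

noncomputable def cwF (N k : ℕ) (x t : ℝ) : ℝ :=
  ∑ σ : Fin N → ({-1, 1} : Finset ℝ), ((N : ℝ) * cwM N σ) ^ k * cwB N x t σ

lemma cwZ_eq (N : ℕ) (x t : ℝ) : cwZ N x t = cwF N 0 x t := by
  simp [cwZ, cwF]

lemma cwF0_pos (N : ℕ) (x t : ℝ) : 0 < cwF N 0 x t := by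
  simp only [cwF, pow_zero, one_mul]
  exact Finset.sum_pos (fun σ _ => Real.exp_pos _) Finset.univ_nonempty

lemma hasDerivAt_cwF_x (N k : ℕ) (x t : ℝ) :
    HasDerivAt (fun y => cwF N k y t) (cwF N (k+1) x t) x := by
  unfold cwF cwB
  apply HasDerivAt.fun_sum
  intro σ _
  have h1 : HasDerivAt (fun y : ℝ => (N:ℝ)*t*(cwM N σ)^2/2 + (N:ℝ)*y*(cwM N σ))
      ((N:ℝ) * cwM N σ) x := by
    simpa using ((((hasDerivAt_id x).const_mul ((N:ℝ))).mul_const (cwM N σ)).const_add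
      ((N:ℝ)*t*(cwM N σ)^2/2))
  have h2 := h1.exp.const_mul (((N:ℝ) * cwM N σ)^k)
  convert h2 using 1 <;> try rfl
  ring

lemma hasDerivAt_cwF_t (N k : ℕ) (hN : (N:ℝ) ≠ 0) (x t : ℝ) :
    HasDerivAt (fun s => cwF N k x s) (cwF N (k+2) x t / (2*(N:ℝ))) t := by
  unfold cwF cwB
  rw [Finset.sum_div]
  apply HasDerivAt.fun_sum
  intro σ _
  have h1 : HasDerivAt (fun s : ℝ => (N:ℝ)*s*(cwM N σ)^2/2 + (N:ℝ)*x*(cwM N σ))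
      ((N:ℝ) * (cwM N σ)^2 / 2) t := by
    simpa using ((((hasDerivAt_id t).const_mul ((N:ℝ))).mul_const ((cwM N σ)^2)).div_const 2
      |>.add_const ((N:ℝ)*x*(cwM N σ)))
  have h2 := h1.exp.const_mul (((N:ℝ) * cwM N σ)^k)
  convert h2 using 1 <;> try rfl
  field_simp
  ring


lemma cwU_eq (N : ℕ) (hN : (N:ℝ) ≠ 0) (x t : ℝ) :
    cwU N x t = -(cwF N 1 x t / ((N:ℝ) * cwF N 0 x t)) := by
  have h : cwF N 1 x t = (N:ℝ) * ∑ σ : Fin N → ({-1, 1} : Finset ℝ), cwM N σ * cwB N x t σ := by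
    rw [cwF, Finset.mul_sum]
    exact Finset.sum_congr rfl (fun σ _ => by ring)
  rw [cwU, cwGibbs, cwZ_eq, h]
  rw [mul_div_mul_left _ _ hN]

lemma cwU_contDiff (N : ℕ) : ContDiff ℝ (⊤ : ℕ∞) (fun p : ℝ × ℝ => cwU N p.1 p.2) := by
  have hB : ∀ σ : Fin N → ({-1, 1} : Finset ℝ),
      ContDiff ℝ (⊤ : ℕ∞) (fun p : ℝ × ℝ => cwB N p.1 p.2 σ) := by
    intro σ
    unfold cwB
    have : ContDiff ℝ (⊤ : ℕ∞) (fun p : ℝ × ℝ => (N : ℝ) * p.2 * cwM N σ ^ 2 / 2 + (N : ℝ) * p.1 * cwM N σ) := by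
      apply ContDiff.add
      · exact ((contDiff_const.mul contDiff_snd).mul contDiff_const).div_const 2
      · exact (contDiff_const.mul contDiff_fst).mul contDiff_const
    exact Real.contDiff_exp.comp this
  have hZ : ContDiff ℝ (⊤ : ℕ∞) (fun p : ℝ × ℝ => cwZ N p.1 p.2) :=
    ContDiff.sum fun σ _ => hB σ
  have hNum : ContDiff ℝ (⊤ : ℕ∞)
      (fun p : ℝ × ℝ => ∑ σ : Fin N → ({-1, 1} : Finset ℝ), cwM N σ * cwB N p.1 p.2 σ) :=
    ContDiff.sum fun σ _ => contDiff_const.mul (hB σ)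
  have hZne : ∀ p : ℝ × ℝ, cwZ N p.1 p.2 ≠ 0 := by
    intro p
    rw [cwZ_eq]
    exact (cwF0_pos N p.1 p.2).ne'
  unfold cwU cwGibbs
  exact (hNum.div hZ hZne).neg

lemma cwF0_zero (N : ℕ) (hN : (N:ℝ) ≠ 0) (x : ℝ) :
    cwF N 0 x 0 = (2 * Real.cosh x) ^ N := by
  simp only [cwF, pow_zero, one_mul, cwB]
  have hm : ∀ σ : Fin N → ({-1, 1} : Finset ℝ),
      (N:ℝ)*0*(cwM N σ)^2/2 + (N:ℝ)*x*(cwM N σ) = ∑ i, x * (σ i : ℝ) := by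
    intro σ
    rw [cwM, ← Finset.mul_sum]
    field_simp
    ring
  calc (∑ σ : Fin N → ({-1, 1} : Finset ℝ),
          Real.exp ((N:ℝ)*0*(cwM N σ)^2/2 + (N:ℝ)*x*(cwM N σ)))
      = ∑ σ : Fin N → ({-1, 1} : Finset ℝ), ∏ i, Real.exp (x * (σ i : ℝ)) := by
        refine Finset.sum_congr rfl (fun σ _ => ?_)
        rw [hm σ, Real.exp_sum]
    _ = ∏ _i : Fin N, ∑ a : ({-1, 1} : Finset ℝ), Real.exp (x * (a : ℝ)) := by
        rw [Finset.prod_univ_sum, Fintype.piFinset_univ]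
    _ = (∑ a : ({-1, 1} : Finset ℝ), Real.exp (x * (a : ℝ))) ^ N := by
        rw [Finset.prod_const, Finset.card_univ, Fintype.card_fin]
    _ = (2 * Real.cosh x) ^ N := by
        congr 1
        rw [Finset.sum_coe_sort _ (fun a => Real.exp (x * a)),
          Finset.sum_pair (by norm_num : (-1:ℝ) ≠ 1), Real.cosh_eq]
        ring_nf

lemma cwF1_zero (N : ℕ) (hN : (N:ℝ) ≠ 0) (x : ℝ) :
    cwF N 1 x 0 = (N:ℝ) * (2 * Real.cosh x) ^ (N-1) * (2 * Real.sinh x) := by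
  have h1 := hasDerivAt_cwF_x N 0 x 0
  have h2 : HasDerivAt (fun y => (2 * Real.cosh y)^N)
      ((N:ℝ) * (2 * Real.cosh x)^(N-1) * (2 * Real.sinh x)) x :=
    ((Real.hasDerivAt_cosh x).const_mul 2).pow N
  have hf : (fun y => cwF N 0 y 0) = fun y => (2 * Real.cosh y)^N :=
    funext fun y => cwF0_zero N hN y
  rw [hf] at h1
  exact h1.unique h2


theorem cwU_solves_viscous_burgers (N : ℕ) (hN : 1 ≤ N) :
    ContDiffOn ℝ (⊤ : ℕ∞) (fun p : ℝ × ℝ => cwU N p.1 p.2) (Set.univ ×ˢ Set.Ici 0) ∧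
    (∀ x : ℝ, cwU N x 0 = -Real.tanh x) ∧
    (∀ x t : ℝ, 0 < t →
      deriv (fun s => cwU N x s) t
        + cwU N x t * deriv (fun y => cwU N y t) x
        - (1 / (2 * (N : ℝ))) * deriv (fun y => deriv (fun z => cwU N z t) y) x = 0) := by
  have hNne : (N:ℝ) ≠ 0 := Nat.cast_ne_zero.mpr (by omega)
  refine ⟨(cwU_contDiff N).contDiffOn, ?_, ?_⟩
  · -- initial condition
    intro x
    rw [cwU_eq N hNne x 0, cwF1_zero N hNne x, cwF0_zero N hNne x,
      Real.tanh_eq_sinh_div_cosh]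
    have hc : Real.cosh x ≠ 0 := (Real.cosh_pos x).ne'
    have hc2 : (2 * Real.cosh x) ^ (N-1) ≠ 0 := pow_ne_zero _ (by positivity)
    have hpow : (2 * Real.cosh x) ^ N = (2 * Real.cosh x) ^ (N-1) * (2 * Real.cosh x) := by
      conv_lhs => rw [show N = (N-1)+1 from by omega, pow_succ]
    rw [hpow]
    field_simp
  · -- Burgers equation
    intro x t _
    have h0 : ∀ y s, ((N:ℝ) * cwF N 0 y s) ≠ 0 :=
      fun y s => mul_ne_zero hNne (cwF0_pos N y s).ne'
    -- time derivative
    have hUt : HasDerivAt (fun s => cwU N x s)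
        (-((cwF N 3 x t / (2*(N:ℝ)) * ((N:ℝ) * cwF N 0 x t)
            - cwF N 1 x t * ((N:ℝ) * (cwF N 2 x t / (2*(N:ℝ)))))
          / ((N:ℝ) * cwF N 0 x t)^2)) t := by
      have hf : (fun s => cwU N x s) = fun s => -(cwF N 1 x s / ((N:ℝ) * cwF N 0 x s)) :=
        funext fun s => cwU_eq N hNne x s
      rw [hf]
      exact (((hasDerivAt_cwF_t N 1 hNne x t).div
        ((hasDerivAt_cwF_t N 0 hNne x t).const_mul ((N:ℝ))) (h0 x t))).neg
    -- first space derivative (as a function of the space point)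
    have hUx : ∀ y : ℝ, HasDerivAt (fun z => cwU N z t)
        (-((cwF N 2 y t * ((N:ℝ) * cwF N 0 y t) - cwF N 1 y t * ((N:ℝ) * cwF N 1 y t))
          / ((N:ℝ) * cwF N 0 y t)^2)) y := by
      intro y
      have hf : (fun z => cwU N z t) = fun z => -(cwF N 1 z t / ((N:ℝ) * cwF N 0 z t)) :=
        funext fun z => cwU_eq N hNne z t
      rw [hf]
      exact (((hasDerivAt_cwF_x N 1 y t).div
        ((hasDerivAt_cwF_x N 0 y t).const_mul ((N:ℝ))) (h0 y t))).neg
    have hdx : (fun y => deriv (fun z => cwU N z t) y)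
        = fun y => -((cwF N 2 y t * ((N:ℝ) * cwF N 0 y t)
            - cwF N 1 y t * ((N:ℝ) * cwF N 1 y t)) / ((N:ℝ) * cwF N 0 y t)^2) :=
      funext fun y => (hUx y).deriv
    -- second space derivative
    have hA : HasDerivAt (fun y => cwF N 2 y t * ((N:ℝ) * cwF N 0 y t)
        - cwF N 1 y t * ((N:ℝ) * cwF N 1 y t))
        ((cwF N 3 x t * ((N:ℝ) * cwF N 0 x t) + cwF N 2 x t * ((N:ℝ) * cwF N 1 x t))
          - (cwF N 2 x t * ((N:ℝ) * cwF N 1 x t) + cwF N 1 x t * ((N:ℝ) * cwF N 2 x t))) x := by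
      exact ((hasDerivAt_cwF_x N 2 x t).mul
          ((hasDerivAt_cwF_x N 0 x t).const_mul ((N:ℝ)))).sub
        ((hasDerivAt_cwF_x N 1 x t).mul ((hasDerivAt_cwF_x N 1 x t).const_mul ((N:ℝ))))
    have hD : HasDerivAt (fun y => ((N:ℝ) * cwF N 0 y t)^2)
        ((2:ℕ) * ((N:ℝ) * cwF N 0 x t)^(2-1) * ((N:ℝ) * cwF N 1 x t)) x :=
      ((hasDerivAt_cwF_x N 0 x t).const_mul ((N:ℝ))).pow 2
    have hUxx : HasDerivAt (fun y => -((cwF N 2 y t * ((N:ℝ) * cwF N 0 y t)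
          - cwF N 1 y t * ((N:ℝ) * cwF N 1 y t)) / ((N:ℝ) * cwF N 0 y t)^2))
        (-((((cwF N 3 x t * ((N:ℝ) * cwF N 0 x t) + cwF N 2 x t * ((N:ℝ) * cwF N 1 x t))
          - (cwF N 2 x t * ((N:ℝ) * cwF N 1 x t) + cwF N 1 x t * ((N:ℝ) * cwF N 2 x t)))
          * ((N:ℝ) * cwF N 0 x t)^2
          - (cwF N 2 x t * ((N:ℝ) * cwF N 0 x t) - cwF N 1 x t * ((N:ℝ) * cwF N 1 x t))
            * ((2:ℕ) * ((N:ℝ) * cwF N 0 x t)^(2-1) * ((N:ℝ) * cwF N 1 x t)))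
          / (((N:ℝ) * cwF N 0 x t)^2)^2)) x :=
      (hA.div hD (pow_ne_zero 2 (h0 x t))).neg
    rw [hUt.deriv, (hUx x).deriv, hdx, hUxx.deriv, cwU_eq N hNne x t]
    have ha := (cwF0_pos N x t).ne'
    field_simp
    ring
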